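/- Let F = {e^{iθ} : θ₀ < θ < π − θ₀} with θ₀ ∈ (−π/2, π/2), and let χ̂_F be the Poisson extension of the characteristic function of F. Then for all z in the open unit disk, ∂χ̂_F/∂z = (cos θ₀)/(πi) · 1/((e^{iθ₀} − z)(e^{−iθ₀} + z)). -/

import Mathlib

open Complex Metric Real

/-- The Poisson integral of the characteristic function of the arc
`F = {e^{iθ} : θ₀ < θ < π − θ₀}`. -/
noncomputable def poissonArc (θ₀ : ℝ) (z : ℂ) : ℝ :=
  (∫ θ in θ₀..(Real.pi - θ₀), ((Complex.exp (θ * Complex.I) + z) /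
      (Complex.exp (θ * Complex.I) - z)).re) / (2 * Real.pi)

/-- The Wirtinger derivative `∂u/∂z = (1/2)(∂u/∂x − i ∂u/∂y)` of a real-valued function
`u` on `ℂ`, expressed via the real Fréchet derivative. -/
noncomputable def wirtinger (u : ℂ → ℝ) (z : ℂ) : ℂ :=
  (1 / 2) * ((fderiv ℝ u z 1 : ℝ) - Complex.I * (fderiv ℝ u z Complex.I : ℝ))

/-!
For `|z| < 1`, `θ ↦ θ - 2i log (1 - z e^{-iθ})` is a primitive of the Herglotz kernel
`(e^{iθ} + z) / (e^{iθ} - z)` (the argument of the logarithm stays in the right half-plane), and it is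
holomorphic in `z` with `z`-derivative `2i / (e^{iθ} - z)`. Hence the Poisson integral of an arc
`(a, b)` is, near `z`, the real part of a holomorphic function, and its Wirtinger derivative is half
the complex derivative: `(i / 2π) (1 / (e^{ib} - z) - 1 / (e^{ia} - z))`. For `b = π - θ₀` we have
`e^{ib} = -e^{-iθ₀}`, and `e^{iθ₀} + e^{-iθ₀} = 2 cos θ₀` gives the stated formula.
-/

open Filter Topology MeasureTheory

theorem Filter.EventuallyEq.wirtinger_eq {u v : ℂ → ℝ} {z : ℂ} (h : u =ᶠ[𝓝 z] v) :
    wirtinger u z = wirtinger v z := by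
  simp only [wirtinger, h.fderiv_eq]

theorem HasDerivAt.wirtinger_re {F : ℂ → ℂ} {c z : ℂ} (hF : HasDerivAt F c z) :
    wirtinger (fun w => (F w).re) z = c / 2 := by
  have hfderiv (v : ℂ) : fderiv ℝ (fun w => (F w).re) z v = (c * v).re := by
    have hre := (reCLM.hasFDerivAt (x := F z)).comp z (hF.hasFDerivAt.restrictScalars ℝ)
    rw [show (fun w => (F w).re) = reCLM ∘ F from rfl, hre.fderiv]
    simp [mul_comm]
  rw [wirtinger, hfderiv, hfderiv, mul_one, mul_I_re, ofReal_neg, mul_neg, sub_neg_eq_add,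
    mul_comm I, re_add_im]
  ring

theorem exp_ofReal_mul_I_sub_ne_zero {z : ℂ} (hz : ‖z‖ < 1) (θ : ℝ) : exp (θ * I) - z ≠ 0 := by
  rw [sub_ne_zero]
  rintro rfl
  simp at hz

theorem one_sub_mul_exp_mem_slitPlane {z : ℂ} (hz : ‖z‖ < 1) (θ : ℝ) :
    1 - z * exp (θ * I) ∈ slitPlane := by
  rw [sub_eq_add_neg]
  exact mem_slitPlane_of_norm_lt_one (by simpa using hz)

theorem one_sub_mul_exp_neg_mul_I {z : ℂ} (θ : ℝ) :
    1 - z * exp (-θ * I) = (exp (θ * I) - z) * exp (-θ * I) := by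
  rw [sub_mul, ← Complex.exp_add]
  simp

noncomputable def herglotzPrimitive (z : ℂ) (θ : ℝ) : ℂ :=
  θ - 2 * I * log (1 - z * exp (-θ * I))

theorem hasDerivAt_herglotzPrimitive {z : ℂ} (hz : ‖z‖ < 1) (θ : ℝ) :
    HasDerivAt (herglotzPrimitive z) ((exp (θ * I) + z) / (exp (θ * I) - z)) θ := by
  have hslit : 1 - z * exp (-θ * I) ∈ slitPlane := by
    simpa using one_sub_mul_exp_mem_slitPlane hz (-θ)
  have hexp : HasDerivAt (fun t : ℝ => exp (-t * I)) (exp (-θ * I) * -I) θ := by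
    simpa using ((hasDerivAt_id (θ : ℂ)).neg.mul_const I).cexp.comp_ofReal
  refine ((hasDerivAt_id θ).ofReal_comp.sub
    ((((hexp.const_mul z).const_sub 1).clog_real hslit).const_mul (2 * I))).congr_deriv ?_
  have hne := exp_ofReal_mul_I_sub_ne_zero hz θ
  have he' := exp_ne_zero (-θ * I)
  rw [one_sub_mul_exp_neg_mul_I, ofReal_one]
  generalize exp (θ * I) = e at hne ⊢
  generalize exp (-θ * I) = e' at he' ⊢
  field_simp
  linear_combination (-2 * z) * I_sq

theorem hasDerivAt_herglotzPrimitive_left {z : ℂ} (hz : ‖z‖ < 1) (θ : ℝ) :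
    HasDerivAt (herglotzPrimitive · θ) (2 * I / (exp (θ * I) - z)) z := by
  have hslit : 1 - z * exp (-θ * I) ∈ slitPlane := by
    simpa using one_sub_mul_exp_mem_slitPlane hz (-θ)
  refine (((((hasDerivAt_id' z).mul_const (exp (-θ * I))).const_sub 1).clog hslit).const_mul
    (2 * I) |>.const_sub (θ : ℂ)).congr_deriv ?_
  have hne := exp_ofReal_mul_I_sub_ne_zero hz θ
  rw [one_sub_mul_exp_neg_mul_I]
  field_simp

theorem intervalIntegrable_herglotzKernel {z : ℂ} (hz : ‖z‖ < 1) (a b : ℝ) :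
    IntervalIntegrable (fun θ : ℝ => (exp (θ * I) + z) / (exp (θ * I) - z)) volume a b :=
  (Continuous.div (by fun_prop) (by fun_prop) (exp_ofReal_mul_I_sub_ne_zero hz)).intervalIntegrable
    a b

theorem integral_herglotzKernel {z : ℂ} (hz : ‖z‖ < 1) (a b : ℝ) :
    ∫ θ in a..b, (exp (θ * I) + z) / (exp (θ * I) - z) =
      herglotzPrimitive z b - herglotzPrimitive z a :=
  intervalIntegral.integral_eq_sub_of_hasDerivAt (fun θ _ => hasDerivAt_herglotzPrimitive hz θ)
    (intervalIntegrable_herglotzKernel hz a b)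

theorem integral_re_herglotzKernel {z : ℂ} (hz : ‖z‖ < 1) (a b : ℝ) :
    ∫ θ in a..b, ((exp (θ * I) + z) / (exp (θ * I) - z)).re =
      (herglotzPrimitive z b - herglotzPrimitive z a).re := by
  rw [← integral_herglotzKernel hz]
  exact intervalIntegral.intervalIntegral_re (intervalIntegrable_herglotzKernel hz a b)

theorem wirtinger_poissonIntegral_arc {z : ℂ} (hz : ‖z‖ < 1) (a b : ℝ) :
    wirtinger (fun w => (∫ θ in a..b, ((exp (θ * I) + w) / (exp (θ * I) - w)).re) / (2 * π)) z =
      I / (2 * π) * (1 / (exp (b * I) - z) - 1 / (exp (a * I) - z)) := by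
  have hprimitive : (fun w => (∫ θ in a..b, ((exp (θ * I) + w) / (exp (θ * I) - w)).re) / (2 * π))
      =ᶠ[𝓝 z] fun w => ((herglotzPrimitive w b - herglotzPrimitive w a) / (2 * π)).re := by
    filter_upwards [isOpen_lt continuous_norm continuous_const |>.mem_nhds hz] with w hw
    rw [integral_re_herglotzKernel hw, ← ofReal_ofNat, ← ofReal_mul, div_ofReal_re]
  have hderiv : HasDerivAt (fun w => (herglotzPrimitive w b - herglotzPrimitive w a) / (2 * π))
      ((2 * I / (exp (b * I) - z) - 2 * I / (exp (a * I) - z)) / (2 * π)) z :=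
    ((hasDerivAt_herglotzPrimitive_left hz b).sub
      (hasDerivAt_herglotzPrimitive_left hz a)).div_const _
  rw [hprimitive.wirtinger_eq, hderiv.wirtinger_re]
  ring

theorem exp_pi_sub_mul_I (θ : ℝ) : exp (↑(π - θ) * I) = -exp (-θ * I) := by
  rw [show (↑(π - θ) * I) = -θ * I + π * I by push_cast; ring, Complex.exp_add, exp_pi_mul_I]
  ring

theorem wirtinger_poissonArc_general (θ₀ : ℝ) (z : ℂ) (hz : z ∈ ball (0 : ℂ) 1) :
    wirtinger (poissonArc θ₀) z =
      (Real.cos θ₀ : ℂ) / (Real.pi * Complex.I) *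
        (1 / ((Complex.exp (θ₀ * Complex.I) - z) * (Complex.exp (-θ₀ * Complex.I) + z))) := by
  have hz' : ‖z‖ < 1 := mem_ball_zero_iff.mp hz
  have hcos : (Real.cos θ₀ : ℂ) = (exp (θ₀ * I) + exp (-θ₀ * I)) / 2 := by
    rw [ofReal_cos, ← two_cos]; ring
  have hne := exp_ofReal_mul_I_sub_ne_zero hz' θ₀
  have hne' : exp (-θ₀ * I) + z ≠ 0 := by
    rw [← neg_ne_zero, neg_add', ← exp_pi_sub_mul_I]
    exact exp_ofReal_mul_I_sub_ne_zero hz' (π - θ₀)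
  calc wirtinger (poissonArc θ₀) z
      = I / (2 * π) * (1 / (exp (↑(π - θ₀) * I) - z) - 1 / (exp (θ₀ * I) - z)) :=
        wirtinger_poissonIntegral_arc hz' θ₀ (π - θ₀)
    _ = _ := by
      rw [exp_pi_sub_mul_I, hcos, show -exp (-θ₀ * I) - z = -(exp (-θ₀ * I) + z) by ring]
      have hπ : (π : ℂ) ≠ 0 := ofReal_ne_zero.mpr pi_ne_zero
      generalize exp (θ₀ * I) = e at hne ⊢
      generalize exp (-θ₀ * I) = e' at hne' ⊢
      field_simp
      linear_combination -(e + e') * I_sq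

/-- For `F = {e^{iθ} : θ₀ < θ < π − θ₀}` with `θ₀ ∈ (−π/2, π/2)` and `z`
in the open unit disk,
`∂χ̂_F/∂z = (cos θ₀)/(π i) · 1/((e^{iθ₀} − z)(e^{−iθ₀} + z))`. -/
theorem wirtinger_poissonArc (θ₀ : ℝ) (hθ₀ : θ₀ ∈ Set.Ioo (-(Real.pi / 2)) (Real.pi / 2))
    (z : ℂ) (hz : z ∈ ball (0 : ℂ) 1) :
    wirtinger (poissonArc θ₀) z =
      (Real.cos θ₀ : ℂ) / (Real.pi * Complex.I) *
        (1 / ((Complex.exp (θ₀ * Complex.I) - z) * (Complex.exp (-θ₀ * Complex.I) + z))) :=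
  wirtinger_poissonArc_general θ₀ z hz
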